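/- Let N ≥ 1 and let e, G : Fin N → ℝ be vectors with G i > 0 for every i. Let 0 < γ₂ ≤ γ₁ and let h : ℝ → ℝ satisfy the slope bounds −γ₁ ≤ (h x − h y)/(x − y) ≤ −γ₂ for all x ≠ y. Let a, â ∈ ℝ with e (last index) = a − â, and suppose either e i ≤ 0 for all i or e i ≥ 0 for all i. Then (∑ i, e i * G i) * (h a − h â) ≤ (∑ i, e i * G i) * γ₂ * (a − â). -/

import Mathlib

/-! The sign condition on `e` forces `∑ eᵢ Gᵢ` and the last component `a - â` to have the same
sign, while the slope bound writes `h a - h â = q (a - â)` with `q ≤ -γ₂ < 0`. Hence the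
left-hand side is at most `-γ₂ (∑ eᵢ Gᵢ)(a - â) ≤ 0`, below the nonnegative right-hand side. -/

open Finset

lemma mul_sub_le_neg_mul_of_slope_le {h : ℝ → ℝ} {γ c x y : ℝ}
    (hslope : x ≠ y → (h x - h y) / (x - y) ≤ -γ) (hc : 0 ≤ c * (x - y)) :
    c * (h x - h y) ≤ -γ * (c * (x - y)) := by
  rcases eq_or_ne x y with rfl | hxy
  · simp
  have hdiff : h x - h y = (h x - h y) / (x - y) * (x - y) :=
    (div_mul_cancel₀ _ (sub_ne_zero.mpr hxy)).symm
  calc c * (h x - h y) = (h x - h y) / (x - y) * (c * (x - y)) := by nth_rw 1 [hdiff]; ring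
    _ ≤ -γ * (c * (x - y)) := mul_le_mul_of_nonneg_right (hslope hxy) hc

lemma sum_mul_mul_nonneg_of_uniform_sign {ι : Type*} [Fintype ι] {e G : ι → ℝ}
    (hG : ∀ i, 0 ≤ G i) (hsign : (∀ i, e i ≤ 0) ∨ (∀ i, 0 ≤ e i)) (j : ι) :
    0 ≤ (∑ i, e i * G i) * e j := by
  rcases hsign with hneg | hpos
  · exact mul_nonneg_of_nonpos_of_nonpos
      (sum_nonpos fun i _ => mul_nonpos_of_nonpos_of_nonneg (hneg i) (hG i)) (hneg j)
  · exact mul_nonneg (sum_nonneg fun i _ => mul_nonneg (hpos i) (hG i)) (hpos j)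

/-- Anode counterpart of the paper's Lemma 1: for a gain vector `G` with all
positive entries, an error vector `e` whose components have a uniform sign, and a
strictly monotonically decreasing nonlinearity `h` with difference quotients
between `-γ₁` and `-γ₂`, one has `(eᵀG) * (h a - h ahat) ≤ (eᵀG) * γ₂ * (a - ahat)`. -/
theorem stmt_1 (N : ℕ) (hN : 1 ≤ N) (e G : Fin N → ℝ)
    (hG : ∀ i, 0 < G i)
    (γ₁ γ₂ : ℝ) (hγ₂ : 0 < γ₂)
    (h : ℝ → ℝ)
    (hslope : ∀ x y : ℝ, x ≠ y →
      -γ₁ ≤ (h x - h y) / (x - y) ∧ (h x - h y) / (x - y) ≤ -γ₂)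
    (a ahat : ℝ)
    (hlast : e ⟨N - 1, Nat.sub_lt (by omega) one_pos⟩ = a - ahat)
    (hsign : (∀ i, e i ≤ 0) ∨ (∀ i, 0 ≤ e i)) :
    (∑ i, e i * G i) * (h a - h ahat) ≤ (∑ i, e i * G i) * γ₂ * (a - ahat) := by
  have hsame : 0 ≤ (∑ i, e i * G i) * (a - ahat) :=
    hlast ▸ sum_mul_mul_nonneg_of_uniform_sign (fun i => (hG i).le) hsign _
  calc (∑ i, e i * G i) * (h a - h ahat)
      ≤ -γ₂ * ((∑ i, e i * G i) * (a - ahat)) :=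
        mul_sub_le_neg_mul_of_slope_le (fun hne => (hslope a ahat hne).2) hsame
    _ ≤ (∑ i, e i * G i) * γ₂ * (a - ahat) := by nlinarith
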